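/- Let N be a Petri net and N' the reduced net obtained by removing a set U of transitions such that no minimal firing sequence to the goal g uses any transition of U. Then g is reachable in N if and only if g is reachable in N'. -/

import Mathlib

structure PetriNet (P T : Type) where
  pre : T → Set P
  post : T → Set P
  M0 : Set P

namespace PetriNet

variable {P T : Type}

/-- The marking obtained by firing `t` from `M`. -/
def fire (N : PetriNet P T) (M : Set P) (t : T) : Set P :=
  (M \ N.pre t) ∪ N.post t

/-- `w` is a firing sequence (each transition enabled in turn) from `M`. -/
def enabledSeq (N : PetriNet P T) : Set P → List T → Prop
  | _, [] => True
  | M, t :: w => N.pre t ⊆ M ∧ enabledSeq N (N.fire M t) w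

/-- The marking reached after firing the word `w` from `M`. -/
def exec (N : PetriNet P T) : Set P → List T → Set P
  | M, [] => M
  | M, t :: w => exec N (N.fire M t) w

/-- The list `M0, M1, …, Mn` of markings visited by the word `w` from `M`. -/
def visited (N : PetriNet P T) : Set P → List T → List (Set P)
  | M, [] => [M]
  | M, t :: w => M :: visited N (N.fire M t) w

/-- `w` is a minimal firing sequence from `M` to goal `g`: it is a firing
sequence reaching `g` and no feasible permutation of it is cycling
(visits the same marking twice). -/
def MinimalFrom (N : PetriNet P T) (M g : Set P) (w : List T) : Prop :=
  N.enabledSeq M w ∧ N.exec M w = g ∧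
    ∀ w' : List T, w'.Perm w → N.enabledSeq M w' → (N.visited M w').Nodup

/-- `M` is reachable from the initial marking. -/
def Reach (N : PetriNet P T) (M : Set P) : Prop :=
  ∃ w : List T, N.enabledSeq N.M0 w ∧ N.exec N.M0 w = M

/-- Safety condition of the paper. -/
def Safe (N : PetriNet P T) : Prop :=
  ∀ M : Set P, N.Reach M → ∀ t : T, N.pre t ⊆ M →
    ∀ p ∈ M ∩ N.fire M t, p ∈ N.pre t ∩ N.post t ∨ p ∉ N.pre t ∪ N.post t

/-- The reduced net `N \ U`: same places and initial marking,
transitions restricted to `T \ U`. -/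
def restrict (N : PetriNet P T) (U : Set T) : PetriNet P {t : T // t ∉ U} where
  pre := fun t => N.pre t.1
  post := fun t => N.post t.1
  M0 := N.M0

end PetriNet


/-!
In a safe net no place of `post t \ pre t` is marked when `t` fires, so firing `t` changes the
indicator function of the marking by `post t - pre t` (the marking equation). Hence all feasible
permutations of a firing sequence end in the same marking, and a shortest firing sequence to `g`
is minimal: a cycling feasible permutation of it could be shortcut to an even shorter firing
sequence to `g`. By hypothesis this sequence avoids `U`, so it is a firing sequence of `N \ U`.
-/

namespace PetriNet

variable {P T : Type} {N : PetriNet P T}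

theorem exec_append (M : Set P) (u v : List T) :
    N.exec M (u ++ v) = N.exec (N.exec M u) v := by
  induction u generalizing M with
  | nil => rfl
  | cons t u ih => exact ih _

theorem enabledSeq_append (M : Set P) (u v : List T) :
    N.enabledSeq M (u ++ v) ↔ N.enabledSeq M u ∧ N.enabledSeq (N.exec M u) v := by
  induction u generalizing M with
  | nil => simp [enabledSeq, exec]
  | cons t u ih => simp [enabledSeq, exec, ih, and_assoc]

theorem Reach.fire {M : Set P} (hM : N.Reach M) {t : T} (ht : N.pre t ⊆ M) :
    N.Reach (N.fire M t) := by
  obtain ⟨u, hu, rfl⟩ := hM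
  exact ⟨u ++ [t], (enabledSeq_append _ u [t]).2 ⟨hu, ht, trivial⟩, exec_append _ u [t]⟩

theorem Safe.notMem_of_mem_post {M : Set P} (hsafe : N.Safe) (hM : N.Reach M) {t : T}
    (ht : N.pre t ⊆ M) {p : P} (hpost : p ∈ N.post t) (hpre : p ∉ N.pre t) : p ∉ M := by
  intro hp
  rcases hsafe M hM t ht p ⟨hp, Or.inr hpost⟩ with h | h
  · exact hpre h.1
  · exact h (Or.inr hpost)

theorem Safe.indicator_fire {M : Set P} (hsafe : N.Safe) (hM : N.Reach M) {t : T}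
    (ht : N.pre t ⊆ M) :
    (N.fire M t).indicator (1 : P → ℤ) =
      M.indicator 1 + ((N.post t).indicator 1 - (N.pre t).indicator 1) := by
  ext p
  by_cases hpre : p ∈ N.pre t
  · have hp : p ∈ M := ht hpre
    by_cases hpost : p ∈ N.post t <;> simp [PetriNet.fire, *]
  · by_cases hpost : p ∈ N.post t
    · have hp := hsafe.notMem_of_mem_post hM ht hpost hpre
      simp [PetriNet.fire, *]
    · by_cases hp : p ∈ M <;> simp [PetriNet.fire, *]

theorem Safe.indicator_exec {M : Set P} (hsafe : N.Safe) (hM : N.Reach M) {w : List T}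
    (hw : N.enabledSeq M w) :
    (N.exec M w).indicator (1 : P → ℤ) =
      M.indicator 1 + (w.map fun t => (N.post t).indicator 1 - (N.pre t).indicator 1).sum := by
  induction w generalizing M with
  | nil => simp [exec]
  | cons t w ih =>
    obtain ⟨ht, hw⟩ := hw
    rw [exec, ih (hM.fire ht) hw, hsafe.indicator_fire hM ht, List.map_cons, List.sum_cons,
      add_assoc]

theorem Safe.exec_perm {M : Set P} (hsafe : N.Safe) (hM : N.Reach M) {w w' : List T}
    (hperm : w'.Perm w) (hw : N.enabledSeq M w) (hw' : N.enabledSeq M w') :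
    N.exec M w' = N.exec M w := by
  refine Set.indicator_one_inj ℤ ?_
  rw [hsafe.indicator_exec hM hw, hsafe.indicator_exec hM hw', (hperm.map _).sum_eq]

theorem exists_le_length_of_mem_visited {M M' : Set P} {w : List T} (hw : N.enabledSeq M w)
    (hM' : M' ∈ N.visited M w) :
    ∃ v : List T, v.length ≤ w.length ∧ N.enabledSeq M' v ∧ N.exec M' v = N.exec M w := by
  induction w generalizing M with
  | nil =>
    obtain rfl : M' = M := List.mem_singleton.1 hM'
    exact ⟨[], le_rfl, trivial, rfl⟩
  | cons t w ih =>
    rcases List.mem_cons.1 hM' with rfl | hM'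
    · exact ⟨t :: w, le_rfl, hw, rfl⟩
    · obtain ⟨v, hlen, hv, hvM⟩ := ih hw.2 hM'
      exact ⟨v, hlen.trans (Nat.le_succ _), hv, hvM⟩

theorem exists_lt_length_of_not_nodup_visited {M : Set P} {w : List T}
    (hw : N.enabledSeq M w) (hdup : ¬(N.visited M w).Nodup) :
    ∃ v : List T, v.length < w.length ∧ N.enabledSeq M v ∧ N.exec M v = N.exec M w := by
  induction w generalizing M with
  | nil => exact absurd (List.nodup_singleton M) hdup
  | cons t w ih =>
    by_cases hM : M ∈ N.visited (N.fire M t) w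
    · obtain ⟨v, hlen, hv, hvM⟩ := exists_le_length_of_mem_visited hw.2 hM
      exact ⟨v, Nat.lt_succ_of_le hlen, hv, hvM⟩
    · have hdup' : ¬(N.visited (N.fire M t) w).Nodup :=
        fun h => hdup (List.nodup_cons.2 ⟨hM, h⟩)
      obtain ⟨v, hlen, hv, hvM⟩ := ih hw.2 hdup'
      exact ⟨t :: v, Nat.succ_lt_succ hlen, ⟨hw.1, hv⟩, hvM⟩

theorem Safe.exists_minimalFrom {g : Set P} (hsafe : N.Safe) (hg : N.Reach g) :
    ∃ w : List T, N.MinimalFrom N.M0 g w := by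
  classical
  have hlen : ∃ n, ∃ w : List T, w.length = n ∧ N.enabledSeq N.M0 w ∧ N.exec N.M0 w = g := by
    obtain ⟨w, hw⟩ := hg
    exact ⟨_, w, rfl, hw⟩
  obtain ⟨w, hwlen, hw, hwg⟩ := Nat.find_spec hlen
  refine ⟨w, hw, hwg, fun w' hperm hw' => by_contra fun hdup => ?_⟩
  obtain ⟨v, hvlen, hv, hvg⟩ := exists_lt_length_of_not_nodup_visited hw' hdup
  have hM0 : N.Reach N.M0 := ⟨[], trivial, rfl⟩
  exact Nat.find_min hlen (hvlen.trans_eq (hperm.length_eq.trans hwlen))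
    ⟨v, rfl, hv, hvg.trans ((hsafe.exec_perm hM0 hperm hw hw').trans hwg)⟩

theorem enabledSeq_restrict (U : Set T) (M : Set P)
    (w : List {t : T // t ∉ U}) :
    (N.restrict U).enabledSeq M w ↔ N.enabledSeq M (w.map Subtype.val) := by
  induction w generalizing M with
  | nil => exact Iff.rfl
  | cons t w ih => exact and_congr Iff.rfl (ih _)

theorem exec_restrict (U : Set T) (M : Set P)
    (w : List {t : T // t ∉ U}) :
    (N.restrict U).exec M w = N.exec M (w.map Subtype.val) := by
  induction w generalizing M with
  | nil => rfl
  | cons t w ih => exact ih _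

end PetriNet

/-- if no minimal firing sequence to `g` uses a transition of
`U`, then `g` is reachable in `N` iff it is reachable in the reduced net
`N \ U`. -/
theorem stmt_4 {P T : Type} (N : PetriNet P T) (hsafe : N.Safe)
    (g : Set P) (U : Set T)
    (hU : ∀ w : List T, N.MinimalFrom N.M0 g w → ∀ t ∈ w, t ∉ U) :
    (∃ w : List T, N.enabledSeq N.M0 w ∧ N.exec N.M0 w = g) ↔
    (∃ w : List {t : T // t ∉ U}, (N.restrict U).enabledSeq (N.restrict U).M0 w ∧
      (N.restrict U).exec (N.restrict U).M0 w = g) := by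
  constructor
  · intro hg
    obtain ⟨w, hw, hwg, hmin⟩ := hsafe.exists_minimalFrom hg
    have hval : (w.attachWith (· ∉ U) (hU w ⟨hw, hwg, hmin⟩)).map Subtype.val = w :=
      List.attachWith_map_subtype_val _
    refine ⟨w.attachWith (· ∉ U) (hU w ⟨hw, hwg, hmin⟩), ?_, ?_⟩
    · rw [PetriNet.enabledSeq_restrict, hval]
      exact hw
    · rw [PetriNet.exec_restrict, hval]
      exact hwg
  · rintro ⟨w, hw, hwg⟩
    exact ⟨w.map Subtype.val, (PetriNet.enabledSeq_restrict U _ w).1 hw,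
      (PetriNet.exec_restrict U _ w).symm.trans hwg⟩
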